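/- arXiv:2301.13134 — 11 statements merged into one kernel-verified Lean document; each statement's English description precedes it below -/
import Mathlib

section
/- Let (R, ∂) be a differential ring with constants C. Then (R, ∂) admits an integration turning it into an integro-differential ring if and only if ∂ is surjective and C has a direct complement as a C-submodule of R. -/
/-- A differential ring `(R, D)` with constants `C = ker D` admits an
integration (turning it into an integro-differential ring) iff `D` is
surjective and `C` has a direct complement as a `C`-submodule of `R`. -/
theorem stmt4 {R : Type*} [Ring R] (D : R → R)
    (hD1 : ∀ f g : R, D (f + g) = D f + D g)
    (hD2 : ∀ f g : R, D (f * g) = D f * g + f * D g) :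
    (∃ I : R → R,
      (∀ f g : R, I (f + g) = I f + I g) ∧
      (∀ c f : R, D c = 0 → I (c * f) = c * I f) ∧
      (∀ c f : R, D c = 0 → I (f * c) = I f * c) ∧
      (∀ f : R, D (I f) = f)) ↔
    (Function.Surjective D ∧
      ∃ N : AddSubgroup R,
        (∀ c n : R, D c = 0 → n ∈ N → c * n ∈ N ∧ n * c ∈ N) ∧
        (∀ f : R, ∃ c : R, D c = 0 ∧ f - c ∈ N) ∧
        (∀ c : R, D c = 0 → c ∈ N → c = 0)) := by
  have hD0 : D 0 = 0 := by
    have h := hD1 0 0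
    simp only [add_zero] at h
    exact left_eq_add.mp h
  have hDneg : ∀ g : R, D (-g) = -D g := by
    intro g
    have h := hD1 g (-g)
    simp only [add_neg_cancel, hD0] at h
    exact eq_neg_of_add_eq_zero_right h.symm
  have hDsub : ∀ f g : R, D (f - g) = D f - D g := by
    intro f g
    rw [sub_eq_add_neg, hD1, hDneg, sub_eq_add_neg]
  constructor
  · rintro ⟨I, hI1, hI2, hI3, hI4⟩
    have hI0 : I 0 = 0 := by
      have h := hI1 0 0
      simp only [add_zero] at h
      exact (left_eq_add.mp h)
    have hIneg : ∀ g : R, I (-g) = -I g := by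
      intro g
      have h := hI1 g (-g)
      simp only [add_neg_cancel, hI0] at h
      exact eq_neg_of_add_eq_zero_right h.symm
    refine ⟨fun f => ⟨I f, hI4 f⟩, ?_⟩
    refine ⟨⟨⟨⟨Set.range I, ?_⟩, ?_⟩, ?_⟩, ?_, ?_, ?_⟩
    · rintro a b ⟨x, rfl⟩ ⟨y, rfl⟩
      exact ⟨x + y, hI1 x y⟩
    · exact ⟨0, hI0⟩
    · rintro a ⟨x, rfl⟩
      exact ⟨-x, hIneg x⟩
    · rintro c n hc ⟨x, rfl⟩
      exact ⟨⟨c * x, hI2 c x hc⟩, ⟨x * c, hI3 c x hc⟩⟩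
    · intro f
      refine ⟨f - I (D f), ?_, ?_⟩
      · rw [hDsub, hI4, sub_self]
      · exact ⟨D f, by abel⟩
    · rintro c hc ⟨x, rfl⟩
      have : x = 0 := by rw [← hI4 x, hc]
      rw [this, hI0]
  · rintro ⟨hsurj, N, hNmul, hNdec, hNtriv⟩
    -- existence and uniqueness of an antiderivative in N
    have hex : ∀ f : R, ∃ n : R, n ∈ N ∧ D n = f := by
      intro f
      obtain ⟨g, hg⟩ := hsurj f
      obtain ⟨c, hc, hn⟩ := hNdec g
      exact ⟨g - c, hn, by rw [hDsub, hc, sub_zero, hg]⟩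
    have huniq : ∀ n m : R, n ∈ N → m ∈ N → D n = D m → n = m := by
      intro n m hn hm h
      have h1 : n - m ∈ N := N.sub_mem hn hm
      have h2 : D (n - m) = 0 := by rw [hDsub, h, sub_self]
      have := hNtriv (n - m) h2 h1
      exact sub_eq_zero.mp this
    choose I hIN hID using hex
    refine ⟨I, ?_, ?_, ?_, hID⟩
    · intro f g
      refine huniq _ _ (hIN (f + g)) (N.add_mem (hIN f) (hIN g)) ?_
      rw [hID, hD1, hID, hID]
    · intro c f hc
      refine huniq _ _ (hIN (c * f)) ((hNmul c (I f) hc (hIN f)).1) ?_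
      rw [hID, hD2, hc, zero_mul, zero_add, hID]
    · intro c f hc
      refine huniq _ _ (hIN (f * c)) ((hNmul c (I f) hc (hIN f)).2) ?_
      rw [hID, hD2, hc, mul_zero, add_zero, hID]
end

section
/- Let R be a ring, C a subring, and ∫ : R → R a C-linear map. There exists a derivation ∂ on R making (R, ∂, ∫) an integro-differential ring with constants exactly C if and only if: (1) ∫ is injective; (2) R = C ⊕ ∫R as C-modules; (3) for all f, g ∈ R, (∫f)(∫g) − ∫((∫f)g) − ∫(f∫g) ∈ C. Moreover, such a derivation is unique if it exists. -/
/-- Given a ring `R`, a subring `C`, and a `C`-linear map `I : R → R`, there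
is a derivation `D` making `(R, D, I)` an integro-differential ring with
constants exactly `C` iff `I` is injective, `R = C ⊕ I R`, and
`(I f)(I g) - I ((I f) g) - I (f (I g)) ∈ C` for all `f, g`.  Moreover such a
derivation is unique. -/
theorem stmt5 {R : Type*} [Ring R] (C : Subring R) (I : R → R)
    (hI1 : ∀ f g : R, I (f + g) = I f + I g)
    (hI2 : ∀ c f : R, c ∈ C → I (c * f) = c * I f)
    (hI3 : ∀ c f : R, c ∈ C → I (f * c) = I f * c) :
    ((∃ D : R → R,
        (∀ f g : R, D (f + g) = D f + D g) ∧
        (∀ f g : R, D (f * g) = D f * g + f * D g) ∧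
        (∀ f : R, D f = 0 ↔ f ∈ C) ∧
        (∀ f : R, D (I f) = f)) ↔
      (Function.Injective I ∧
        (∀ f : R, ∃ c g : R, c ∈ C ∧ f = c + I g) ∧
        (∀ c g : R, c ∈ C → c = I g → c = 0) ∧
        (∀ f g : R, I f * I g - I (I f * g) - I (f * I g) ∈ C))) ∧
    (∀ D D' : R → R,
      ((∀ f g : R, D (f + g) = D f + D g) ∧
        (∀ f g : R, D (f * g) = D f * g + f * D g) ∧
        (∀ f : R, D f = 0 ↔ f ∈ C) ∧
        (∀ f : R, D (I f) = f)) →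
      ((∀ f g : R, D' (f + g) = D' f + D' g) ∧
        (∀ f g : R, D' (f * g) = D' f * g + f * D' g) ∧
        (∀ f : R, D' f = 0 ↔ f ∈ C) ∧
        (∀ f : R, D' (I f) = f)) →
      D = D') := by
  have hI0 : I 0 = 0 := by
    have := hI1 0 0
    simp only [add_zero] at this
    exact (left_eq_add.mp this)
  have hIneg : ∀ g : R, I (-g) = - I g := by
    intro g
    have h := hI1 g (-g)
    simp only [add_neg_cancel, hI0] at h
    exact eq_neg_of_add_eq_zero_right h.symm
  have hIsub : ∀ a b : R, I (a - b) = I a - I b := by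
    intro a b
    rw [sub_eq_add_neg, hI1, hIneg, sub_eq_add_neg]
  constructor
  · constructor
    · rintro ⟨D, hadd, hmul, hker, hDI⟩
      have hD0 : D 0 = 0 := by
        have := hadd 0 0
        simp only [add_zero] at this
        exact (left_eq_add.mp this)
      have hDneg : ∀ f : R, D (-f) = - D f := by
        intro f
        have h := hadd f (-f)
        simp only [add_neg_cancel, hD0] at h
        exact eq_neg_of_add_eq_zero_right h.symm
      have hDsub : ∀ f g : R, D (f - g) = D f - D g := by
        intro f g
        rw [sub_eq_add_neg, hadd, hDneg, sub_eq_add_neg]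
      refine ⟨?_, ?_, ?_, ?_⟩
      · intro f g h
        have h1 := hDI f
        rw [h, hDI] at h1
        exact h1.symm
      · intro f
        refine ⟨f - I (D f), D f, ?_, by abel⟩
        rw [← hker, hDsub, hDI, sub_self]
      · intro c g hc hcg
        have h1 : D c = 0 := (hker c).mpr hc
        rw [hcg, hDI] at h1
        rw [hcg, h1, hI0]
      · intro f g
        rw [← hker, hDsub, hDsub, hmul, hDI, hDI, hDI, hDI]
        abel
    · rintro ⟨hinj, hdec, hdir, hC⟩
      choose cf gf hcf hfg using hdec
      have key : ∀ f c' g' : R, c' ∈ C → f = c' + I g' → gf f = g' := by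
        intro f c' g' hc' hfg'
        have h : cf f + I (gf f) = c' + I g' := (hfg f).symm.trans hfg'
        have h1 : cf f - c' = I (g' - gf f) := by
          rw [hIsub, sub_eq_sub_iff_add_eq_add, add_comm (I g') c']
          exact h
        have h2 : cf f - c' = 0 := hdir _ _ (sub_mem (hcf f) hc') h1
        rw [h2, hIsub] at h1
        exact (hinj (sub_eq_zero.mp h1.symm)).symm
      refine ⟨gf, ?_, ?_, ?_, ?_⟩
      · intro f g
        apply key _ (cf f + cf g) _ (add_mem (hcf f) (hcf g))
        rw [hI1]
        conv_lhs => rw [hfg f, hfg g]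
        abel
      · intro f g
        set u := gf f with hu
        set v := gf g with hv
        have hk := hC u v
        have hkey : gf (f * g) = cf f * v + u * cf g + (I u * v + u * I v) := by
          apply key _ (cf f * cf g + (I u * I v - I (I u * v) - I (u * I v)))
            (cf f * v + u * cf g + (I u * v + u * I v))
            (add_mem (mul_mem (hcf f) (hcf g)) hk)
          rw [hI1, hI1, hI1, hI2 _ _ (hcf f), hI3 _ _ (hcf g)]
          conv_lhs => rw [hfg f, hfg g]
          noncomm_ring
        rw [hkey]
        conv_rhs => rw [hfg f, hfg g]
        noncomm_ring
      · intro f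
        constructor
        · intro h
          have hf := hfg f
          rw [h, hI0, add_zero] at hf
          rw [hf]; exact hcf f
        · intro hf
          apply key f f 0 hf
          rw [hI0, add_zero]
      · intro f
        apply key (I f) 0 f (zero_mem C)
        rw [zero_add]
  · rintro D D' ⟨hadd, hmul, hker, hDI⟩ ⟨hadd', hmul', hker', hDI'⟩
    funext f
    have hD0 : D 0 = 0 := by
      have := hadd 0 0
      simp only [add_zero] at this
      exact (left_eq_add.mp this)
    have hDneg : ∀ x : R, D (-x) = - D x := by
      intro x
      have h := hadd x (-x)
      simp only [add_neg_cancel, hD0] at h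
      exact eq_neg_of_add_eq_zero_right h.symm
    have hc : f - I (D f) ∈ C := by
      rw [← hker, sub_eq_add_neg, hadd, hDneg, hDI]
      exact add_neg_cancel _
    have h1 : D' (f - I (D f)) = 0 := (hker' _).mpr hc
    have h2 : D' f = D' (f - I (D f)) + D' (I (D f)) := by
      rw [← hadd', sub_add_cancel]
    rw [h1, hDI', zero_add] at h2
    exact h2.symm
end

section
/- Let (R, ∂, ∫) be an integro-differential ring with induced evaluation E. Then the following are equivalent: (1) E is multiplicative: E(fg) = (Ef)(Eg) for all f, g; (2) ∫ satisfies the Rota-Baxter identity (∫f)(∫g) = ∫((∫f)g) + ∫(f∫g) for all f, g; (3) the hybrid Rota-Baxter identity (∫∂f)(∫∂g) = (∫∂f)g + f(∫∂g) − ∫∂(fg) holds for all f, g. -/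
private lemma aux7 {R : Type*} [Ring R] (X a b f g : R) :
    (f * g - X = (f - a) * (g - b)) ↔ (a * b = a * g + f * b - X) := by
  constructor <;> intro h
  · calc a * b = (f - a) * (g - b) - f * g + f * b + a * g := by noncomm_ring
      _ = (f * g - X) - f * g + f * b + a * g := by rw [← h]
      _ = a * g + f * b - X := by noncomm_ring
  · calc f * g - X = f * g - f * b - a * g + (a * g + f * b - X) := by noncomm_ring
      _ = f * g - f * b - a * g + a * b := by rw [← h]
      _ = (f - a) * (g - b) := by noncomm_ring

/-- In an integro-differential ring, the following are equivalent:
(1) the induced evaluation `E` is multiplicative;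
(2) `I` satisfies the Rota-Baxter identity;
(3) the hybrid Rota-Baxter identity holds. -/
theorem stmt7 {R : Type*} [Ring R] (D I E : R → R)
    (hD1 : ∀ f g : R, D (f + g) = D f + D g)
    (hD2 : ∀ f g : R, D (f * g) = D f * g + f * D g)
    (hI1 : ∀ f g : R, I (f + g) = I f + I g)
    (hI2 : ∀ c f : R, D c = 0 → I (c * f) = c * I f)
    (hI3 : ∀ c f : R, D c = 0 → I (f * c) = I f * c)
    (hDI : ∀ f : R, D (I f) = f)
    (hE : ∀ f : R, E f = f - I (D f)) :
    ((∀ f g : R, E (f * g) = E f * E g) ↔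
      (∀ f g : R, I f * I g = I (I f * g) + I (f * I g))) ∧
    ((∀ f g : R, E (f * g) = E f * E g) ↔
      (∀ f g : R, I (D f) * I (D g) =
        I (D f) * g + f * I (D g) - I (D (f * g)))) := by
  -- basic facts about D
  have hD0 : D 0 = 0 := by
    have h := hD1 0 0
    simp only [add_zero] at h
    exact left_eq_add.mp h
  have hDneg : ∀ f : R, D (-f) = - D f := by
    intro f
    have h := hD1 f (-f)
    rw [add_neg_cancel, hD0] at h
    exact (neg_eq_of_add_eq_zero_right h.symm).symm
  have hDsub : ∀ f g : R, D (f - g) = D f - D g := by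
    intro f g
    rw [sub_eq_add_neg, hD1, hDneg, ← sub_eq_add_neg]
  -- `f - I (D f)` (the evaluation of f) is a constant
  have hDc : ∀ f : R, D (f - I (D f)) = 0 := by
    intro f
    rw [hDsub, hDI, sub_self]
  -- (1) ↔ (3)
  have h13 : (∀ f g : R, E (f * g) = E f * E g) ↔
      (∀ f g : R, I (D f) * I (D g) =
        I (D f) * g + f * I (D g) - I (D (f * g))) := by
    constructor <;> intro h f g <;> have hfg := h f g
    · rw [hE, hE, hE] at hfg
      exact (aux7 (I (D (f * g))) (I (D f)) (I (D g)) f g).mp hfg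
    · rw [hE, hE, hE]
      exact (aux7 (I (D (f * g))) (I (D f)) (I (D g)) f g).mpr hfg
  -- (1) → (2), via (3)
  have h12 : (∀ f g : R, E (f * g) = E f * E g) →
      (∀ f g : R, I f * I g = I (I f * g) + I (f * I g)) := by
    intro h1 f g
    have h := (h13.mp h1) (I f) (I g)
    rw [hDI, hDI, hD2, hDI, hDI, hI1] at h
    -- h : I f * I g = I f * I g + I f * I g - (I (f * I g) + I (I f * g))
    have h' : I f * I g + (I (f * I g) + I (I f * g)) = I f * I g + I f * I g := by
      have := eq_sub_iff_add_eq.mp h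
      rw [← add_assoc] at this ⊢
      exact this
    have h'' : I (f * I g) + I (I f * g) = I f * I g := add_left_cancel h'
    rw [← h'']
    abel
  -- (2) → (1)
  have h21 : (∀ f g : R, I f * I g = I (I f * g) + I (f * I g)) →
      (∀ f g : R, E (f * g) = E f * E g) := by
    intro h2 f g
    set a := I (D f) with ha
    set b := I (D g) with hb
    have hRB : a * b = I (a * D g) + I (D f * b) := h2 (D f) (D g)
    -- decompose I (D f * g)
    have e1 : D f * g = D f * (g - b) + D f * b := by noncomm_ring
    have e2 : f * D g = (f - a) * D g + a * D g := by noncomm_ring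
    have key : I (D (f * g)) = a * (g - b) + (f - a) * b + a * b := by
      rw [hD2, hI1, e1, e2, hI1, hI1, hI3 _ _ (hDc g), hI2 _ _ (hDc f), hRB]
      abel
    rw [hE, hE, hE, key]
    noncomm_ring
  exact ⟨⟨h12, h21⟩, h13⟩
end

section
/- Let (R, ∂, ∫) be an integro-differential ring with induced evaluation E. Then for all f, g ∈ R the Rota-Baxter identity with evaluation holds: (∫f)(∫g) = ∫(f·∫g) + ∫((∫f)·g) + E((∫f)(∫g)). -/
/-- Rota-Baxter identity with evaluation:
`(I f)(I g) = I (f · I g) + I ((I f) · g) + E ((I f)(I g))`. -/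
theorem stmt8 {R : Type*} [Ring R] (D I E : R → R)
    (hD1 : ∀ f g : R, D (f + g) = D f + D g)
    (hD2 : ∀ f g : R, D (f * g) = D f * g + f * D g)
    (hI1 : ∀ f g : R, I (f + g) = I f + I g)
    (hI2 : ∀ c f : R, D c = 0 → I (c * f) = c * I f)
    (hI3 : ∀ c f : R, D c = 0 → I (f * c) = I f * c)
    (hDI : ∀ f : R, D (I f) = f)
    (hE : ∀ f : R, E f = f - I (D f)) :
    ∀ f g : R, I f * I g = I (f * I g) + I (I f * g) + E (I f * I g) := by
  intro f g
  rw [hE, hD2, hDI, hDI, hI1]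
  abel
end

section
/- Let (R, ∂, ∫) be an integro-differential ring with induced evaluation E. Then for all f, g ∈ R: (∫∂f)(∫∂g) = (∫∂f)g + f(∫∂g) − ∫∂(fg) − E((∫∂f)(∫∂g)). -/
/-- Hybrid Rota-Baxter identity with evaluation:
`(I∂f)(I∂g) = (I∂f)g + f(I∂g) − I∂(fg) − E((I∂f)(I∂g))`. -/
theorem stmt9 {R : Type*} [Ring R] (D I E : R → R)
    (hD1 : ∀ f g : R, D (f + g) = D f + D g)
    (hD2 : ∀ f g : R, D (f * g) = D f * g + f * D g)
    (hI1 : ∀ f g : R, I (f + g) = I f + I g)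
    (hI2 : ∀ c f : R, D c = 0 → I (c * f) = c * I f)
    (hI3 : ∀ c f : R, D c = 0 → I (f * c) = I f * c)
    (hDI : ∀ f : R, D (I f) = f)
    (hE : ∀ f : R, E f = f - I (D f)) :
    ∀ f g : R, I (D f) * I (D g) =
      I (D f) * g + f * I (D g) - I (D (f * g)) - E (I (D f) * I (D g)) := by
  intro f g
  set a := I (D f) with ha
  set b := I (D g) with hb
  clear_value a b
  have hDsub : ∀ x y : R, D (x - y) = D x - D y := by
    intro x y
    have h := hD1 (x - y) y
    rw [sub_add_cancel] at h
    exact eq_sub_of_add_eq h.symm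
  have hca : D (f - a) = 0 := by rw [hDsub, ha, hDI, sub_self]
  have hcb : D (g - b) = 0 := by rw [hDsub, hb, hDI, sub_self]
  have h1 : I (D f * (g - b)) = a * (g - b) := by rw [hI3 (g - b) (D f) hcb, ha]
  have h2 : I ((f - a) * D g) = (f - a) * b := by rw [hI2 (f - a) (D g) hca, hb]
  have hfg : I (D (f * g)) = I (D f * g) + I (f * D g) := by rw [hD2, hI1]
  have hs1 : I (D f * g) = a * (g - b) + I (D f * b) := by
    have h : D f * g = D f * (g - b) + D f * b := by noncomm_ring
    rw [h, hI1, h1]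
  have hs2 : I (f * D g) = (f - a) * b + I (a * D g) := by
    have h : f * D g = (f - a) * D g + a * D g := by noncomm_ring
    rw [h, hI1, h2]
  have hab : I (D (a * b)) = I (D f * b) + I (a * D g) := by
    rw [hD2, ha, hb, hDI, hDI, hI1]
  rw [hE, hfg, hs1, hs2, hab]
  noncomm_ring
end

section
/- Let (R, ∂, ∫) be an integro-differential ring with constants C, and set x_0 := 1 and x_n := ∫^n 1 for n ≥ 1. Then the elements x_0, x_1, x_2, … commute with all elements of C and are C-linearly independent. -/
/-- The repeated integrals `x n = I^[n] 1` commute with all constants and are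
linearly independent over the constants. -/
theorem stmt10 {R : Type*} [Ring R] (D I : R → R)
    (hD1 : ∀ f g : R, D (f + g) = D f + D g)
    (hD2 : ∀ f g : R, D (f * g) = D f * g + f * D g)
    (hI1 : ∀ f g : R, I (f + g) = I f + I g)
    (hI2 : ∀ c f : R, D c = 0 → I (c * f) = c * I f)
    (hI3 : ∀ c f : R, D c = 0 → I (f * c) = I f * c)
    (hDI : ∀ f : R, D (I f) = f)
    (x : ℕ → R) (hx : ∀ n : ℕ, x n = I^[n] 1) :
    (∀ (c : R) (n : ℕ), D c = 0 → c * x n = x n * c) ∧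
    (∀ (n : ℕ) (c : ℕ → R), (∀ i, D (c i) = 0) →
      (∑ i ∈ Finset.range (n + 1), c i * x i) = 0 → ∀ i ≤ n, c i = 0) := by
  have hD0 : D 0 = 0 := by
    have h := hD1 0 0
    simp only [add_zero] at h
    exact (add_eq_left.mp h.symm)
  have hDone : D 1 = 0 := by
    have h := hD2 1 1
    simp only [mul_one, one_mul] at h
    exact (add_eq_left.mp h.symm)
  have hDx : ∀ n, D (x (n + 1)) = x n := by
    intro n
    rw [hx, hx, Function.iterate_succ_apply', hDI]
  have hx0 : x 0 = 1 := by rw [hx]; rfl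
  let Dh : R →+ R := AddMonoidHom.mk' D hD1
  constructor
  · intro c n hc
    induction n with
    | zero => simp [hx0]
    | succ n ih =>
      rw [hx] at ih ⊢
      rw [Function.iterate_succ_apply', ← hI2 c _ hc, ih, hI3 _ _ hc]
  · intro n
    induction n with
    | zero =>
      intro c hc hs i hi
      interval_cases i
      simpa [hx0] using hs
    | succ n ih =>
      intro c hc hs i hi
      have hder : (∑ i ∈ Finset.range (n + 1), c (i + 1) * x i) = 0 := by
        have h1 : Dh (∑ i ∈ Finset.range (n + 2), c i * x i) = 0 := by
          rw [hs]; exact hD0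
        rw [map_sum] at h1
        have h2 : ∀ i ∈ Finset.range (n + 2), Dh (c i * x i) = c i * D (x i) := by
          intro i _
          show D (c i * x i) = _
          rw [hD2, hc i, zero_mul, zero_add]
        rw [Finset.sum_congr rfl h2, Finset.sum_range_succ'] at h1
        have hx0' : D (x 0) = 0 := by rw [hx0]; exact hDone
        rw [hx0', mul_zero, add_zero] at h1
        simpa [hDx] using h1
      have hc1 : ∀ j, 1 ≤ j → j ≤ n + 1 → c j = 0 := by
        intro j h1j hjn
        have := ih (fun i => c (i + 1)) (fun i => hc (i + 1)) hder (j - 1) (by omega)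
        simpa [Nat.sub_add_cancel h1j] using this
      rcases Nat.eq_zero_or_pos i with h0 | h0
      · subst h0
        have h0' : ∑ i ∈ Finset.range (n + 2), c i * x i = c 0 * x 0 :=
          Finset.sum_eq_single_of_mem 0 (by simp) (fun b hb hb0 => by
            rw [hc1 b (Nat.one_le_iff_ne_zero.mpr hb0)
              (Nat.lt_succ_iff.mp (Finset.mem_range.mp hb)), zero_mul])
        have : c 0 * x 0 = 0 := h0'.symm.trans hs
        simpa [hx0] using this
      · exact hc1 i h0 hi
end

section
/- Let (R, ∂, ∫) be an integro-differential ring with constants C, x_n := ∫^n 1 (x_0 := 1). Then the C-module P spanned by {1, x_1, x_2, …} is closed under multiplication, ∂, and ∫, i.e., P is an integro-differential subring of R. If moreover ℚ ⊆ R, then P = C[x_1], the subring generated by C and x_1. -/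
set_option linter.unusedVariables false
set_option linter.unusedSectionVars false

section Aux
variable {R : Type*} [Ring R] (D I : R → R)

def Pmem (D : R → R) (x : ℕ → R) (f : R) : Prop :=
  ∃ (n : ℕ) (c : ℕ → R), (∀ i, D (c i) = 0) ∧ f = ∑ i ∈ Finset.range (n + 1), c i * x i

variable (x : ℕ → R)

lemma auxD0 (hD1 : ∀ f g : R, D (f + g) = D f + D g) : D 0 = 0 := by
  have h := hD1 0 0
  simp only [add_zero] at h
  exact (left_eq_add.mp h)

lemma auxDneg (hD1 : ∀ f g : R, D (f + g) = D f + D g) (f : R) : D (-f) = - D f := by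
  have h : D (f + (-f)) = D f + D (-f) := hD1 f (-f)
  rw [add_neg_cancel, auxD0 D hD1] at h
  exact (neg_eq_of_add_eq_zero_right h.symm).symm

lemma auxDsub (hD1 : ∀ f g : R, D (f + g) = D f + D g) (f g : R) :
    D (f - g) = D f - D g := by
  rw [sub_eq_add_neg, hD1, auxDneg D hD1, sub_eq_add_neg]

lemma auxD1 (hD2 : ∀ f g : R, D (f * g) = D f * g + f * D g) : D (1 : R) = 0 := by
  have h := hD2 1 1
  simp only [mul_one, one_mul] at h
  exact (left_eq_add.mp h)

lemma auxDnsmul (hD1 : ∀ f g : R, D (f + g) = D f + D g) (n : ℕ) (f : R) :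
    D (n • f) = n • D f := by
  induction n with
  | zero => simpa using auxD0 D hD1
  | succ k ih => rw [succ_nsmul, succ_nsmul, hD1, ih]

lemma auxI0 (hI1 : ∀ f g : R, I (f + g) = I f + I g) : I 0 = 0 := by
  have h := hI1 0 0
  simp only [add_zero] at h
  exact (left_eq_add.mp h)

lemma auxDsum (hD1 : ∀ f g : R, D (f + g) = D f + D g) (s : Finset ℕ) (f : ℕ → R) :
    D (∑ i ∈ s, f i) = ∑ i ∈ s, D (f i) := by
  classical
  induction s using Finset.induction_on with
  | empty => simpa using auxD0 D hD1
  | insert a s' h ih => rw [Finset.sum_insert h, Finset.sum_insert h, hD1, ih]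

lemma auxIsum (hI1 : ∀ f g : R, I (f + g) = I f + I g) (s : Finset ℕ) (f : ℕ → R) :
    I (∑ i ∈ s, f i) = ∑ i ∈ s, I (f i) := by
  classical
  induction s using Finset.induction_on with
  | empty => simpa using auxI0 I hI1
  | insert a s' h ih => rw [Finset.sum_insert h, Finset.sum_insert h, hI1, ih]

lemma auxInsmul (hI1 : ∀ f g : R, I (f + g) = I f + I g) (n : ℕ) (f : R) :
    I (n • f) = n • I f := by
  induction n with
  | zero => simpa using auxI0 I hI1
  | succ k ih => rw [succ_nsmul, succ_nsmul, hI1, ih]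

lemma auxX0 (hx : ∀ n : ℕ, x n = I^[n] 1) : x 0 = 1 := by simp [hx 0]

lemma auxIx (hx : ∀ n : ℕ, x n = I^[n] 1) (n : ℕ) : I (x n) = x (n + 1) := by
  rw [hx n, hx (n + 1), Function.iterate_succ_apply']

lemma auxDx (hDI : ∀ f : R, D (I f) = f) (hx : ∀ n : ℕ, x n = I^[n] 1) (n : ℕ) :
    D (x (n + 1)) = x n := by
  rw [← auxIx I x hx n, hDI]

section Main
variable (hD1 : ∀ f g : R, D (f + g) = D f + D g)
    (hD2 : ∀ f g : R, D (f * g) = D f * g + f * D g)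
    (hI1 : ∀ f g : R, I (f + g) = I f + I g)
    (hI2 : ∀ c f : R, D c = 0 → I (c * f) = c * I f)
    (hI3 : ∀ c f : R, D c = 0 → I (f * c) = I f * c)
    (hDI : ∀ f : R, D (I f) = f)
    (hx : ∀ n : ℕ, x n = I^[n] 1)

include hD1 hD2 hI1 hI2 hI3 hDI hx

lemma Pmem_const {c : R} (hc : D c = 0) : Pmem D x c :=
  ⟨0, fun _ => c, fun _ => hc, by simp [auxX0 I x hx]⟩

lemma Pmem_one : Pmem D x 1 := Pmem_const D I x hD1 hD2 hI1 hI2 hI3 hDI hx (auxD1 D hD2)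

lemma Pmem_zero : Pmem D x 0 :=
  ⟨0, fun _ => 0, fun _ => auxD0 D hD1, by simp⟩

lemma Pmem_add {f g : R} (hf : Pmem D x f) (hg : Pmem D x g) : Pmem D x (f + g) := by
  obtain ⟨n, c, hc, rfl⟩ := hf
  obtain ⟨m, d, hd, rfl⟩ := hg
  classical
  refine ⟨n + m, fun i => (if i < n + 1 then c i else 0) + (if i < m + 1 then d i else 0),
    fun i => ?_, ?_⟩
  · rw [hD1]
    split_ifs <;> simp [hc, hd, auxD0 D hD1]
  · have key : ∀ (k : ℕ) (e : ℕ → R), k ≤ n + m →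
        (∑ i ∈ Finset.range (n + m + 1), (if i < k + 1 then e i else 0) * x i)
          = ∑ i ∈ Finset.range (k + 1), e i * x i := by
      intro k e hk
      rw [← Finset.sum_subset (Finset.range_subset_range.mpr (by omega : k + 1 ≤ n + m + 1))]
      · exact Finset.sum_congr rfl fun i hi => by
          rw [if_pos (Finset.mem_range.mp hi)]
      · intro i _ hi
        rw [if_neg (by simpa using hi), zero_mul]
    simp only [add_mul, Finset.sum_add_distrib]
    rw [key n c (by omega), key m d (by omega)]

lemma Pmem_sum (s : Finset ℕ) (f : ℕ → R) (hf : ∀ i ∈ s, Pmem D x (f i)) :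
    Pmem D x (∑ i ∈ s, f i) := by
  classical
  induction s using Finset.induction_on with
  | empty => simpa using Pmem_zero D I x hD1 hD2 hI1 hI2 hI3 hDI hx
  | @insert a s' ha ih =>
      rw [Finset.sum_insert ha]
      exact Pmem_add D I x hD1 hD2 hI1 hI2 hI3 hDI hx
        (hf a (Finset.mem_insert_self a s'))
        (ih fun i hi => hf i (Finset.mem_insert_of_mem hi))

lemma Pmem_smul {a f : R} (ha : D a = 0) (hf : Pmem D x f) : Pmem D x (a * f) := by
  obtain ⟨n, c, hc, rfl⟩ := hf
  refine ⟨n, fun i => a * c i, fun i => by rw [hD2, ha, hc, zero_mul, mul_zero, add_zero], ?_⟩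
  rw [Finset.mul_sum]
  exact Finset.sum_congr rfl fun i _ => (mul_assoc a (c i) (x i)).symm

lemma Pmem_neg {f : R} (hf : Pmem D x f) : Pmem D x (-f) := by
  obtain ⟨n, c, hc, rfl⟩ := hf
  refine ⟨n, fun i => -(c i), fun i => ?_, ?_⟩
  · rw [auxDneg D hD1, hc, neg_zero]
  · rw [← Finset.sum_neg_distrib]
    exact Finset.sum_congr rfl fun i _ => (neg_mul (c i) (x i)).symm

lemma Pmem_I {f : R} (hf : Pmem D x f) : Pmem D x (I f) := by
  obtain ⟨n, c, hc, rfl⟩ := hf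
  classical
  refine ⟨n + 1, fun i => match i with | 0 => 0 | j + 1 => c j, fun i => ?_, ?_⟩
  · match i with
    | 0 => exact auxD0 D hD1
    | j + 1 => exact hc j
  · rw [auxIsum I hI1, Finset.sum_range_succ' (fun i => _ * x i) (n + 1)]
    simp only [zero_mul, add_zero]
    exact Finset.sum_congr rfl fun i _ => by rw [hI2 _ _ (hc i), auxIx I x hx]

lemma Pmem_x (n : ℕ) : Pmem D x (x n) := by
  induction n with
  | zero => rw [auxX0 I x hx]; exact Pmem_one D I x hD1 hD2 hI1 hI2 hI3 hDI hx
  | succ k ih =>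
      rw [← auxIx I x hx]
      exact Pmem_I D I x hD1 hD2 hI1 hI2 hI3 hDI hx ih

lemma Pmem_D {f : R} (hf : Pmem D x f) : Pmem D x (D f) := by
  obtain ⟨n, c, hc, rfl⟩ := hf
  classical
  have h1 : D (∑ i ∈ Finset.range (n + 1), c i * x i)
      = ∑ i ∈ Finset.range (n + 1), c i * D (x i) := by
    rw [auxDsum D hD1]
    exact Finset.sum_congr rfl fun i _ => by rw [hD2, hc, zero_mul, zero_add]
  refine ⟨n, fun i => if i < n then c (i + 1) else 0, fun i => ?_, ?_⟩
  · dsimp only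
    split_ifs with h
    · exact hc _
    · exact auxD0 D hD1
  · rw [h1, Finset.sum_range_succ' (fun i => c i * D (x i)) n,
      Finset.sum_range_succ (fun i => (if i < n then c (i + 1) else 0) * x i) n,
      if_neg (lt_irrefl n), zero_mul, add_zero, auxX0 I x hx, auxD1 D hD2, mul_zero, add_zero]
    exact Finset.sum_congr rfl fun i hi => by
      rw [if_pos (Finset.mem_range.mp hi), auxDx D I x hDI hx]

lemma Pmem_rsmul_x : ∀ (i : ℕ) {a : R}, D a = 0 → Pmem D x (x i * a) := by
  intro i
  induction i with
  | zero =>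
      intro a ha
      rw [auxX0 I x hx, one_mul]
      exact Pmem_const D I x hD1 hD2 hI1 hI2 hI3 hDI hx ha
  | succ k ih =>
      intro a ha
      rw [← auxIx I x hx, ← hI3 _ _ ha]
      exact Pmem_I D I x hD1 hD2 hI1 hI2 hI3 hDI hx (ih ha)

lemma Pmem_xmul : ∀ (m n : ℕ), Pmem D x (x m * x n) := by
  have key : ∀ (N m n : ℕ), m + n ≤ N → Pmem D x (x m * x n) := by
    intro N
    induction N with
    | zero =>
        intro m n h
        obtain ⟨rfl, rfl⟩ : m = 0 ∧ n = 0 := by omega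
        rw [auxX0 I x hx, one_mul]
        exact Pmem_one D I x hD1 hD2 hI1 hI2 hI3 hDI hx
    | succ N ih =>
        intro m n h
        match m, n with
        | 0, n =>
            rw [auxX0 I x hx, one_mul]
            exact Pmem_x D I x hD1 hD2 hI1 hI2 hI3 hDI hx n
        | m + 1, 0 =>
            rw [auxX0 I x hx, mul_one]
            exact Pmem_x D I x hD1 hD2 hI1 hI2 hI3 hDI hx (m + 1)
        | m + 1, n + 1 =>
            set h0 : R := x (m + 1) * x (n + 1) with hh0
            have hDh : D h0 = x m * x (n + 1) + x (m + 1) * x n := by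
              rw [hh0, hD2, auxDx D I x hDI hx, auxDx D I x hDI hx]
            have hIDh : Pmem D x (I (D h0)) := by
              apply Pmem_I D I x hD1 hD2 hI1 hI2 hI3 hDI hx
              rw [hDh]
              exact Pmem_add D I x hD1 hD2 hI1 hI2 hI3 hDI hx
                (ih m (n + 1) (by omega)) (ih (m + 1) n (by omega))
            have hconst : D (h0 - I (D h0)) = 0 := by
              rw [auxDsub D hD1, hDI, sub_self]
            have : h0 = I (D h0) + (h0 - I (D h0)) := by abel
            rw [hh0] at this ⊢
            rw [this]
            exact Pmem_add D I x hD1 hD2 hI1 hI2 hI3 hDI hx hIDh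
              (Pmem_const D I x hD1 hD2 hI1 hI2 hI3 hDI hx hconst)
  intro m n
  exact key (m + n) m n le_rfl

lemma Pmem_mulx {f : R} (hf : Pmem D x f) (j : ℕ) : Pmem D x (f * x j) := by
  obtain ⟨n, c, hc, rfl⟩ := hf
  rw [Finset.sum_mul]
  apply Pmem_sum D I x hD1 hD2 hI1 hI2 hI3 hDI hx
  intro i _
  rw [mul_assoc]
  exact Pmem_smul D I x hD1 hD2 hI1 hI2 hI3 hDI hx (hc i)
    (Pmem_xmul D I x hD1 hD2 hI1 hI2 hI3 hDI hx i j)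

lemma Pmem_mul {f g : R} (hf : Pmem D x f) (hg : Pmem D x g) : Pmem D x (f * g) := by
  obtain ⟨n, c, hc, rfl⟩ := hf
  obtain ⟨m, d, hd, rfl⟩ := hg
  rw [Finset.sum_mul]
  apply Pmem_sum D I x hD1 hD2 hI1 hI2 hI3 hDI hx
  intro i _
  rw [mul_assoc, Finset.mul_sum]
  apply Pmem_smul D I x hD1 hD2 hI1 hI2 hI3 hDI hx (hc i)
  apply Pmem_sum D I x hD1 hD2 hI1 hI2 hI3 hDI hx
  intro j _
  rw [← mul_assoc]
  exact Pmem_mulx D I x hD1 hD2 hI1 hI2 hI3 hDI hx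
    (Pmem_rsmul_x D I x hD1 hD2 hI1 hI2 hI3 hDI hx i (hd j)) j

/-- Key recurrence: `x 1 * x n = (n+1) • x (n+1) + (lower order terms)`. -/
lemma lemA : ∀ n : ℕ, ∃ c : ℕ → R, (∀ i, D (c i) = 0) ∧
    x 1 * x n = (n + 1) • x (n + 1) + ∑ i ∈ Finset.range (n + 1), c i * x i := by
  intro n
  induction n with
  | zero =>
      refine ⟨fun _ => 0, fun _ => auxD0 D hD1, ?_⟩
      rw [auxX0 I x hx, mul_one]
      simp
  | succ n ih =>
      obtain ⟨c, hc, heq⟩ := ih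
      set h0 : R := x 1 * x (n + 1) with hh0
      have hDx1 : D (x 1) = 1 := by
        rw [← auxX0 I x hx]
        exact auxDx D I x hDI hx 0
      have hDh : D h0 = (n + 2) • x (n + 1) + ∑ i ∈ Finset.range (n + 1), c i * x i := by
        rw [hh0, hD2, hDx1, one_mul, auxDx D I x hDI hx, heq]
        rw [show (n + 2) • x (n + 1) = x (n + 1) + (n + 1) • x (n + 1) from succ_nsmul' _ _]
        abel
      have hIDh : I (D h0) = (n + 2) • x (n + 2)
          + ∑ i ∈ Finset.range (n + 1), c i * x (i + 1) := by
        rw [hDh, hI1, auxInsmul I hI1, auxIx I x hx, auxIsum I hI1]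
        congr 1
        exact Finset.sum_congr rfl fun i _ => by rw [hI2 _ _ (hc i), auxIx I x hx]
      have hE : D (h0 - I (D h0)) = 0 := by rw [auxDsub D hD1, hDI, sub_self]
      refine ⟨fun i => match i with | 0 => h0 - I (D h0) | j + 1 => c j, fun i => ?_, ?_⟩
      · match i with
        | 0 => exact hE
        | j + 1 => exact hc j
      · rw [Finset.sum_range_succ' (fun i =>
          (match i with | 0 => h0 - I (D h0) | j + 1 => c j) * x i) (n + 1)]
        simp only
        rw [auxX0 I x hx, mul_one]
        conv_lhs => rw [show h0 = I (D h0) + (h0 - I (D h0)) by abel]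
        rw [hIDh]
        abel

end Main
end Aux
/-- The `C`-module `P` spanned by the repeated integrals `x n = I^[n] 1` is
closed under multiplication, `D`, and `I` (an integro-differential subring).
If moreover `ℚ ⊆ R`, then `P` equals the subring generated by the constants
together with `x 1`. -/
theorem stmt11 {R : Type*} [Ring R] (D I : R → R)
    (hD1 : ∀ f g : R, D (f + g) = D f + D g)
    (hD2 : ∀ f g : R, D (f * g) = D f * g + f * D g)
    (hI1 : ∀ f g : R, I (f + g) = I f + I g)
    (hI2 : ∀ c f : R, D c = 0 → I (c * f) = c * I f)
    (hI3 : ∀ c f : R, D c = 0 → I (f * c) = I f * c)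
    (hDI : ∀ f : R, D (I f) = f)
    (x : ℕ → R) (hx : ∀ n : ℕ, x n = I^[n] 1)
    (P : Set R)
    (hP : P = {f : R | ∃ (n : ℕ) (c : ℕ → R), (∀ i, D (c i) = 0) ∧
      f = ∑ i ∈ Finset.range (n + 1), c i * x i}) :
    (1 : R) ∈ P ∧
    (∀ f g : R, f ∈ P → g ∈ P → f + g ∈ P) ∧
    (∀ f g : R, f ∈ P → g ∈ P → f * g ∈ P) ∧
    (∀ f : R, f ∈ P → D f ∈ P) ∧
    (∀ f : R, f ∈ P → I f ∈ P) ∧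
    (∀ [Algebra ℚ R],
      P = ↑(Subring.closure ({c : R | D c = 0} ∪ {x 1}))) := by
  subst hP
  have hmemP : ∀ f : R, f ∈ {f : R | ∃ (n : ℕ) (c : ℕ → R), (∀ i, D (c i) = 0) ∧
      f = ∑ i ∈ Finset.range (n + 1), c i * x i} ↔ Pmem D x f := fun f => Iff.rfl
  refine ⟨Pmem_one D I x hD1 hD2 hI1 hI2 hI3 hDI hx,
    fun f g hf hg => Pmem_add D I x hD1 hD2 hI1 hI2 hI3 hDI hx hf hg,
    fun f g hf hg => Pmem_mul D I x hD1 hD2 hI1 hI2 hI3 hDI hx hf hg,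
    fun f hf => Pmem_D D I x hD1 hD2 hI1 hI2 hI3 hDI hx hf,
    fun f hf => Pmem_I D I x hD1 hD2 hI1 hI2 hI3 hDI hx hf, ?_⟩
  intro inst
  set S : Set R := {c : R | D c = 0} ∪ {x 1} with hS
  have hCcl : ∀ c : R, D c = 0 → c ∈ Subring.closure S :=
    fun c hc => Subring.subset_closure (Or.inl hc)
  have hx1cl : x 1 ∈ Subring.closure S := Subring.subset_closure (Or.inr rfl)
  have xcl : ∀ k, x k ∈ Subring.closure S := by
    have main : ∀ n, ∀ k ≤ n, x k ∈ Subring.closure S := by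
      intro n
      induction n with
      | zero =>
          intro k hk
          interval_cases k
          rw [auxX0 I x hx]
          exact one_mem _
      | succ n ih =>
          intro k hk
          by_cases hkn : k ≤ n
          · exact ih k hkn
          · have hk1 : k = n + 1 := by omega
            subst hk1
            obtain ⟨c, hc, heq⟩ := lemA D I x hD1 hD2 hI1 hI2 hI3 hDI hx n
            have hmem : ((n + 1) • x (n + 1)) ∈ Subring.closure S := by
              have h' : (n + 1) • x (n + 1)
                  = x 1 * x n - ∑ i ∈ Finset.range (n + 1), c i * x i := by
                rw [heq]; abel
              rw [h']
              refine sub_mem (mul_mem hx1cl (ih n le_rfl)) (Subring.sum_mem _ fun i hi => ?_)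
              exact mul_mem (hCcl _ (hc i)) (ih i (Nat.lt_succ_iff.mp (Finset.mem_range.mp hi)))
            set q : R := ((n + 1 : ℚ)⁻¹) • (1 : R) with hqdef
            have hne : ((n : ℚ) + 1) ≠ 0 := by positivity
            have h1 : (n + 1 : ℕ) • q = (1 : R) := by
              rw [hqdef, ← Nat.cast_smul_eq_nsmul ℚ, smul_smul]
              push_cast
              rw [mul_inv_cancel₀ hne, one_smul]
            have hq0 : D q = 0 := by
              have h2 : (n + 1 : ℕ) • D q = 0 := by
                rw [← auxDnsmul D hD1, h1, auxD1 D hD2]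
              have h3 : ((n : ℚ) + 1) • D q = 0 := by
                have := Nat.cast_smul_eq_nsmul ℚ (n + 1) (D q)
                push_cast at this
                rw [this]; exact h2
              have := congrArg (fun z => ((n : ℚ) + 1)⁻¹ • z) h3
              simpa [inv_smul_smul₀ hne] using this
            have hqx : q * ((n + 1 : ℕ) • x (n + 1)) = x (n + 1) := by
              rw [hqdef, smul_mul_assoc, one_mul, ← Nat.cast_smul_eq_nsmul ℚ, smul_smul]
              push_cast
              rw [inv_mul_cancel₀ hne, one_smul]
            rw [← hqx]
            exact mul_mem (hCcl q hq0) hmem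
    exact fun k => main k k le_rfl
  apply Set.Subset.antisymm
  · intro f hf
    obtain ⟨n, c, hc, rfl⟩ := (hmemP f).mp hf
    exact Subring.sum_mem _ fun i _ => mul_mem (hCcl _ (hc i)) (xcl i)
  · let T : Subring R :=
      { carrier := {f : R | Pmem D x f}
        one_mem' := Pmem_one D I x hD1 hD2 hI1 hI2 hI3 hDI hx
        mul_mem' := fun hf hg => Pmem_mul D I x hD1 hD2 hI1 hI2 hI3 hDI hx hf hg
        add_mem' := fun hf hg => Pmem_add D I x hD1 hD2 hI1 hI2 hI3 hDI hx hf hg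
        zero_mem' := Pmem_zero D I x hD1 hD2 hI1 hI2 hI3 hDI hx
        neg_mem' := fun hf => Pmem_neg D I x hD1 hD2 hI1 hI2 hI3 hDI hx hf }
    have hle : Subring.closure S ≤ T := by
      rw [Subring.closure_le]
      rintro f (hf | hf)
      · exact Pmem_const D I x hD1 hD2 hI1 hI2 hI3 hDI hx hf
      · rw [Set.mem_singleton_iff] at hf
        subst hf
        exact Pmem_x D I x hD1 hD2 hI1 hI2 hI3 hDI hx 1
    exact fun f hf => (hmemP f).mpr (hle hf)
end

section
/- Let (R, ∂, ∫) be an integro-differential ring with constants C and x_n := ∫^n 1. If the induced evaluation E satisfies E(x_m x_n) = 0 for all m, n ≥ 1, then x_m x_n = binomial(m+n, m) · x_{m+n} for all m, n ∈ ℕ; if additionally ℚ ⊆ R, then x_n = x_1^n / n! for all n. -/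
/-- If the induced evaluation kills products `x m * x n` for `m, n ≥ 1`,
where `x n = I^[n] 1`, then `x m * x n = (m+n choose m) * x (m+n)`; if
moreover `ℚ ⊆ R`, then `x n = x₁ⁿ / n!`. -/
theorem stmt12 {R : Type*} [Ring R] (D I E : R → R)
    (hD1 : ∀ f g : R, D (f + g) = D f + D g)
    (hD2 : ∀ f g : R, D (f * g) = D f * g + f * D g)
    (hI1 : ∀ f g : R, I (f + g) = I f + I g)
    (hI2 : ∀ c f : R, D c = 0 → I (c * f) = c * I f)
    (hI3 : ∀ c f : R, D c = 0 → I (f * c) = I f * c)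
    (hDI : ∀ f : R, D (I f) = f)
    (hE : ∀ f : R, E f = f - I (D f))
    (x : ℕ → R) (hx : ∀ n : ℕ, x n = I^[n] 1)
    (hEx : ∀ m n : ℕ, 1 ≤ m → 1 ≤ n → E (x m * x n) = 0) :
    (∀ m n : ℕ, x m * x n = ((m + n).choose m : R) * x (m + n)) ∧
    (∀ [Algebra ℚ R], ∀ n : ℕ,
      x n = algebraMap ℚ R (1 / n.factorial) * (x 1) ^ n) := by
  have hx0 : x 0 = 1 := by simp [hx]
  have hxs : ∀ n, x (n + 1) = I (x n) := by
    intro n; simp [hx, Function.iterate_succ_apply']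
  have hDx : ∀ n, D (x (n + 1)) = x n := by intro n; rw [hxs, hDI]
  have hD1' : D (1 : R) = 0 := by
    have := hD2 1 1
    simp at this
    exact this
  have hDnat : ∀ k : ℕ, D (k : R) = 0 := by
    intro k
    induction k with
    | zero =>
      have := hD1 0 0
      simpa using this
    | succ k ih =>
      push_cast
      rw [hD1, ih, hD1']; simp
  have key : ∀ k m n : ℕ, m + n = k →
      x m * x n = ((m + n).choose m : R) * x (m + n) := by
    intro k
    induction k with
    | zero =>
      intro m n hmn
      obtain ⟨rfl, rfl⟩ : m = 0 ∧ n = 0 := by omega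
      simp [hx0]
    | succ k ih =>
      intro m n hmn
      rcases m with _ | m
      · simp [hx0]
      rcases n with _ | n
      · simp [hx0]
      have hE' := hEx (m + 1) (n + 1) (by omega) (by omega)
      rw [hE] at hE'
      have h0 : x (m + 1) * x (n + 1) = I (D (x (m + 1) * x (n + 1))) :=
        sub_eq_zero.mp hE'
      rw [hD2, hDx, hDx, hI1] at h0
      have e1 : x m * x (n + 1) = ((m + n + 1).choose m : R) * x (m + n + 1) := by
        have := ih m (n + 1) (by omega)
        simpa [show m + (n + 1) = m + n + 1 by omega] using this
      have e2 : x (m + 1) * x n = ((m + n + 1).choose (m + 1) : R) * x (m + n + 1) := by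
        have := ih (m + 1) n (by omega)
        simpa [show m + 1 + n = m + n + 1 by omega] using this
      rw [e1, e2, hI2 _ _ (hDnat _), hI2 _ _ (hDnat _), ← hxs] at h0
      rw [h0, ← add_mul]
      have hch : ((m + 1 + (n + 1)).choose (m + 1) : ℕ) =
          (m + n + 1).choose m + (m + n + 1).choose (m + 1) := by
        rw [show m + 1 + (n + 1) = (m + n + 1) + 1 by omega]
        exact Nat.choose_succ_succ' (m + n + 1) m
      have : x (m + n + 1 + 1) = x (m + 1 + (n + 1)) := by
        congr 1; omega
      rw [this, hch]
      push_cast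
      ring
  refine ⟨fun m n => key (m + n) m n rfl, ?_⟩
  intro inst n
  induction n with
  | zero => simp [hx0]
  | succ n ih =>
    have h1 : x 1 * x n = ((n + 1 : ℕ) : R) * x (n + 1) := by
      have := key (1 + n) 1 n rfl
      simpa [Nat.choose_one_right, Nat.add_comm 1 n] using this
    set a := algebraMap ℚ R with ha
    have hxn1 : x (n + 1) = a (1 / (n + 1 : ℚ)) * (x 1 * x n) := by
      rw [h1, ← mul_assoc]
      have : a (1 / (n + 1 : ℚ)) * ((n + 1 : ℕ) : R) = 1 := by
        have : ((n + 1 : ℕ) : R) = a ((n + 1 : ℕ) : ℚ) := by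
          simp
        rw [this, ← map_mul]
        rw [show (1 / (n + 1 : ℚ)) * ((n + 1 : ℕ) : ℚ) = 1 by
          push_cast; field_simp]
        simp
      rw [this, one_mul]
    rw [hxn1, ih]
    rw [show x 1 * (a (1 / (n.factorial : ℚ)) * x 1 ^ n)
        = a (1 / (n.factorial : ℚ)) * x 1 ^ (n + 1) from by
      rw [← mul_assoc, ← Algebra.commutes (1 / (n.factorial : ℚ)) (x 1),
        mul_assoc, ← pow_succ']]
    rw [← mul_assoc, ← map_mul]
    have : (1 / (n + 1 : ℚ)) * (1 / (n.factorial : ℚ)) =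
        1 / ((n + 1).factorial : ℚ) := by
      rw [Nat.factorial_succ]
      push_cast
      field_simp
    rw [this]
end

section
/- Let (R, ∂, ∫) be an integro-differential ring with induced evaluation E and constants C. Suppose a, z ∈ R with ∂z + az = 0, z has a multiplicative right inverse z⁻¹ ∈ R, and E z has a right inverse (Ez)⁻¹ ∈ C. Then for every f ∈ R, the element y := (1 − z(Ez)⁻¹ E)(z ∫(z⁻¹ f)), i.e., y := z∫(z⁻¹f) − z(Ez)⁻¹·E(z∫(z⁻¹f)), satisfies ∂y + ay = f and E y = 0 (solution of the homogeneous initial value problem). -/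
/-- Variation of constants with homogeneous initial condition: if
`D z + a z = 0`, `z * zi = 1`, and `E z * ci = 1` with `ci` a constant, then
`y = z * I (zi * f) - z * ci * E (z * I (zi * f))` satisfies `D y + a y = f`
and `E y = 0`. -/
theorem stmt17 {R : Type*} [Ring R] (D I E : R → R)
    (hD1 : ∀ f g : R, D (f + g) = D f + D g)
    (hD2 : ∀ f g : R, D (f * g) = D f * g + f * D g)
    (hI1 : ∀ f g : R, I (f + g) = I f + I g)
    (hI2 : ∀ c f : R, D c = 0 → I (c * f) = c * I f)
    (hI3 : ∀ c f : R, D c = 0 → I (f * c) = I f * c)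
    (hDI : ∀ f : R, D (I f) = f)
    (hE : ∀ f : R, E f = f - I (D f))
    (a z zi ci : R) (hz : D z + a * z = 0) (hzi : z * zi = 1)
    (hci : D ci = 0) (hEz : E z * ci = 1) :
    ∀ f : R,
      (D (z * I (zi * f) - z * ci * E (z * I (zi * f)))
        + a * (z * I (zi * f) - z * ci * E (z * I (zi * f))) = f) ∧
      E (z * I (zi * f) - z * ci * E (z * I (zi * f))) = 0 := by
  intro f
  have hD0 : D 0 = 0 := by
    have h := hD1 0 0; simpa using h
  have hDneg : ∀ g : R, D (-g) = - D g := by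
    intro g
    have h := hD1 g (-g)
    rw [add_neg_cancel, hD0] at h
    exact (neg_eq_of_add_eq_zero_right h.symm).symm
  have hDsub : ∀ g h : R, D (g - h) = D g - D h := by
    intro g h
    rw [sub_eq_add_neg, hD1, hDneg, sub_eq_add_neg]
  have hDE : ∀ g : R, D (E g) = 0 := by
    intro g
    rw [hE, hDsub, hDI, sub_self]
  set u : R := z * I (zi * f) with hu
  set w : R := E u with hw
  have hDw : D w = 0 := hDE u
  have hcw : D (ci * w) = 0 := by
    rw [hD2, hci, hDw, mul_zero, zero_mul, add_zero]
  -- D u + a u = f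
  have key1 : D u + a * u = f := by
    have h1 : D u + a * u = (D z + a * z) * I (zi * f) + z * zi * f := by
      rw [hu, hD2, hDI]; noncomm_ring
    rw [h1, hz, hzi, zero_mul, zero_add, one_mul]
  -- the correction term solves the homogeneous equation
  have key2 : D (z * ci * w) + a * (z * ci * w) = 0 := by
    have h1 : D (z * ci * w) = D z * (ci * w) := by
      rw [mul_assoc, hD2, hcw, mul_zero, add_zero]
    rw [h1, mul_assoc z ci w]
    calc D z * (ci * w) + a * (z * (ci * w))
        = (D z + a * z) * (ci * w) := by noncomm_ring
      _ = 0 := by rw [hz, zero_mul]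
  constructor
  · rw [hDsub]
    calc D u - D (z * ci * w) + a * (u - z * ci * w)
        = (D u + a * u) - (D (z * ci * w) + a * (z * ci * w)) := by noncomm_ring
      _ = f := by rw [key1, key2, sub_zero]
  · -- E (z * ci * w) = w
    have hEcorr : E (z * ci * w) = w := by
      have h1 : D (z * ci * w) = D z * (ci * w) := by
        rw [mul_assoc, hD2, hcw, mul_zero, add_zero]
      rw [hE, h1, hI3 (ci * w) (D z) hcw]
      calc z * ci * w - I (D z) * (ci * w)
          = (z - I (D z)) * ci * w := by noncomm_ring
        _ = E z * ci * w := by rw [← hE]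
        _ = w := by rw [hEz, one_mul]
    have hD1' : D (1 : R) = 0 := by
      have h := hD2 1 1; simpa using h
    have hDneg1 : D (-1 : R) = 0 := by rw [hDneg, hD1', neg_zero]
    have hIneg : ∀ g : R, I (-g) = - I g := by
      intro g
      have := hI2 (-1) g hDneg1
      simpa using this
    have hIsub : ∀ g h : R, I (g - h) = I g - I h := by
      intro g h
      rw [sub_eq_add_neg, hI1, hIneg, sub_eq_add_neg]
    rw [hE, hDsub, hIsub]
    have : u - z * ci * w - (I (D u) - I (D (z * ci * w)))
        = (u - I (D u)) - (z * ci * w - I (D (z * ci * w))) := by noncomm_ring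
    rw [this, ← hE, ← hE, hEcorr, ← hw, sub_self]
end

section
/- Let (R, ∂, ∫) be an integro-differential ring with induced evaluation E. Then for every n ∈ ℕ and every f ∈ R: f = Σ_{i=0}^{n} ∫^i E(∂^i f) + ∫^{n+1}(∂^{n+1} f), where ∫^i E(∂^i f) means applying ∫ i times to the constant E(∂^i f). -/
/-- Taylor formula with repeated-integral remainder:
`f = Σ_{i=0}^{n} I^i (E (D^i f)) + I^{n+1} (D^{n+1} f)`. -/
theorem stmt18 {R : Type*} [Ring R] (D I E : R → R)
    (hD1 : ∀ f g : R, D (f + g) = D f + D g)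
    (hD2 : ∀ f g : R, D (f * g) = D f * g + f * D g)
    (hI1 : ∀ f g : R, I (f + g) = I f + I g)
    (hI2 : ∀ c f : R, D c = 0 → I (c * f) = c * I f)
    (hI3 : ∀ c f : R, D c = 0 → I (f * c) = I f * c)
    (hDI : ∀ f : R, D (I f) = f)
    (hE : ∀ f : R, E f = f - I (D f)) :
    ∀ (n : ℕ) (f : R),
      f = (∑ i ∈ Finset.range (n + 1), I^[i] (E (D^[i] f)))
        + I^[n + 1] (D^[n + 1] f) := by
  have hIk : ∀ (k : ℕ) (a b : R), I^[k] (a + b) = I^[k] a + I^[k] b := by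
    intro k
    induction k with
    | zero => intro a b; simp
    | succ k ih =>
      intro a b
      simp only [Function.iterate_succ_apply, hI1, ih]
  intro n
  induction n with
  | zero =>
    intro f
    simp [hE]
  | succ n ih =>
    intro f
    have key : I^[n+1] (D^[n+1] f)
        = I^[n+1] (E (D^[n+1] f)) + I^[n+1+1] (D^[n+1+1] f) := by
      have h1 : D^[n+1] f = E (D^[n+1] f) + I (D (D^[n+1] f)) := by
        rw [hE]; abel
      calc I^[n+1] (D^[n+1] f)
          = I^[n+1] (E (D^[n+1] f) + I (D (D^[n+1] f))) := by rw [← h1]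
        _ = I^[n+1] (E (D^[n+1] f)) + I^[n+1] (I (D (D^[n+1] f))) := hIk _ _ _
        _ = I^[n+1] (E (D^[n+1] f)) + I^[n+1+1] (D^[n+1+1] f) := by
            rw [← Function.iterate_succ_apply I, ← Function.iterate_succ_apply' D]
    rw [Finset.sum_range_succ, add_assoc, ← key, ← ih f]
end

section
/- Let (R, ∂, ∫) be an integro-differential ring with ℚ ⊆ R, induced evaluation E, and x := ∫1. Assume E is multiplicative on the subring generated by 1, i.e., E(x_m x_n) = 0 for all m, n ≥ 1 where x_k := ∫^k 1 (so x_k = x^k/k!). Then for all f ∈ R and n ∈ ℕ: f = Σ_{k=0}^{n} (x^k/k!)·E(∂^k f) + Σ_{k=0}^{n} ((−1)^{n−k}/(k!(n−k)!))·x^k·∫(x^{n−k}·∂^{n+1}f) − Σ_{k=0}^{n−1} Σ_{j=1}^{n−k} ((−1)^{n−k−j}/(k!·j!·(n−k−j)!))·x^k·E(x^j·∫(x^{n−k−j}·∂^{n+1}f)). -/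
open Finset

lemma qhelper (N : ℕ) (hN : 1 ≤ N) :
    ∑ j ∈ range (N+1), (-1:ℚ)^(N-j)/(j.factorial * (N-j).factorial) = 0 := by
  have hcast : ∑ j ∈ range (N+1), ((-1:ℚ))^j * (N.choose j) = 0 := by
    have h := Int.alternating_sum_range_choose (n := N)
    rw [if_neg (by omega)] at h
    have := congrArg (fun z : ℤ => (z : ℚ)) h
    push_cast at this
    simpa using this
  have step : ∀ j ∈ range (N+1),
      (-1:ℚ)^(N-j)/(j.factorial * (N-j).factorial)
        = ((-1:ℚ)^N / N.factorial) * ((-1:ℚ)^j * (N.choose j)) := by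
    intro j hj
    rw [mem_range] at hj
    have hjN : j ≤ N := by omega
    have hfac : (N.choose j * j.factorial * (N-j).factorial : ℚ) = N.factorial := by
      exact_mod_cast congrArg (fun z : ℕ => (z : ℚ)) (Nat.choose_mul_factorial_mul_factorial hjN)
    have hb : (-1:ℚ)^j * (-1:ℚ)^j = 1 := by
      rcases Nat.even_or_odd j with h | h <;> simp [h.neg_one_pow]
    have hmul : (-1:ℚ)^(N-j) * (-1:ℚ)^j = (-1:ℚ)^N := by
      rw [← pow_add]; congr 1; omega
    have hsign : (-1:ℚ)^(N-j) = (-1:ℚ)^N * (-1:ℚ)^j := by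
      calc (-1:ℚ)^(N-j) = ((-1:ℚ)^(N-j) * (-1:ℚ)^j) * (-1:ℚ)^j := by
            rw [mul_assoc, hb, mul_one]
        _ = (-1:ℚ)^N * (-1:ℚ)^j := by rw [hmul]
    have hj0 : (j.factorial : ℚ) ≠ 0 := by positivity
    have hNj0 : ((N-j).factorial : ℚ) ≠ 0 := by positivity
    have hN0 : (N.factorial : ℚ) ≠ 0 := by positivity
    rw [hsign]
    field_simp
    linear_combination (-1:ℚ) * hfac
  rw [Finset.sum_congr rfl step, ← Finset.mul_sum, hcast, mul_zero]

lemma qsum1 (n : ℕ) :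
    ∑ k ∈ range (n+1), (-1:ℚ)^(n-k)/(k.factorial * (n+1-k).factorial)
      = 1/(n+1).factorial := by
  have h := qhelper (n+1) (by omega)
  rw [Finset.sum_range_succ] at h
  have hflip : ∀ k ∈ range (n+1),
      (-1:ℚ)^(n+1-k)/(k.factorial * (n+1-k).factorial)
        = -((-1:ℚ)^(n-k)/(k.factorial * (n+1-k).factorial)) := by
    intro k hk
    rw [mem_range] at hk
    have : n+1-k = (n-k)+1 := by omega
    rw [this, pow_succ]
    ring
  rw [Finset.sum_congr rfl hflip, Finset.sum_neg_distrib] at h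
  simp at h
  rw [one_div]
  linarith

lemma qkey (M : ℕ) :
    (-1:ℚ)^M/(M+1).factorial
      + ∑ j ∈ Icc 1 M, (-1:ℚ)^(M-j)/(j.factorial*(M+1-j).factorial)
      = 1/(M+1).factorial := by
  have h := qhelper (M+1) (by omega)
  rw [Finset.sum_range_succ, Finset.sum_range_succ'] at h
  have hIcc : ∑ j ∈ Icc 1 M, (-1:ℚ)^(M+1-j)/(j.factorial*(M+1-j).factorial)
      = ∑ k ∈ range M, (-1:ℚ)^(M+1-(k+1))/((k+1).factorial*(M+1-(k+1)).factorial) := by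
    rw [show Icc 1 M = Ico 1 (M+1) by rfl, Finset.sum_Ico_eq_sum_range]
    simp only [Nat.add_sub_cancel]
    refine Finset.sum_congr rfl fun i hi => ?_
    rw [mem_range] at hi
    have e1 : M+1-(1+i) = M-(1+i)+1 := by omega
    have e2 : M+1-(1+i+1) = M-(1+i) := by omega
    have e3 : (1:ℕ)+i = i+1 := by omega
    rw [e3]
  have hflip : ∀ j ∈ Icc 1 M,
      (-1:ℚ)^(M+1-j)/(j.factorial*(M+1-j).factorial)
        = -((-1:ℚ)^(M-j)/(j.factorial*(M+1-j).factorial)) := by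
    intro j hj
    rw [mem_Icc] at hj
    have : M+1-j = (M-j)+1 := by omega
    rw [this, pow_succ]
    ring
  rw [Finset.sum_congr rfl hflip, Finset.sum_neg_distrib] at hIcc
  rw [← hIcc] at h
  simp [Nat.sub_self] at h ⊢
  have hpow : (-1:ℚ)^(M+1) = -(-1:ℚ)^M := by rw [pow_succ]; ring
  rw [hpow, neg_div] at h
  linarith

lemma qm2 (a b : ℚ) (m : ℕ) :
    a/(b*(m.factorial:ℚ)) * (1/((m:ℚ)+1)) = a/(b*(((m+1).factorial:ℚ))) := by
  rw [div_mul_div_comm, mul_one, Nat.factorial_succ]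
  push_cast
  ring_nf

lemma qfac (c a u v : ℚ) : 1/c * (a/(u*v)) = a/(c*u*v) := by
  rw [div_mul_div_comm, one_mul, ← mul_assoc]

lemma qfac2 (c a u : ℚ) : 1/c * (a/u) = a/(c*u) := by
  rw [div_mul_div_comm, one_mul]

/-- Generalized Taylor formula with integral remainder and correction terms
for non-multiplicative evaluation, in an integro-differential ring containing
`ℚ` where `E` is multiplicative on the subring generated by `1`. -/
theorem stmt19 {R : Type*} [Ring R] [Algebra ℚ R] (D I E : R → R)
    (hD1 : ∀ f g : R, D (f + g) = D f + D g)
    (hD2 : ∀ f g : R, D (f * g) = D f * g + f * D g)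
    (hI1 : ∀ f g : R, I (f + g) = I f + I g)
    (hI2 : ∀ c f : R, D c = 0 → I (c * f) = c * I f)
    (hI3 : ∀ c f : R, D c = 0 → I (f * c) = I f * c)
    (hDI : ∀ f : R, D (I f) = f)
    (hE : ∀ f : R, E f = f - I (D f))
    (x : R) (hx : x = I 1)
    (hEmul : ∀ m n : ℕ, 1 ≤ m → 1 ≤ n → E (I^[m] 1 * I^[n] 1) = 0) :
    ∀ (f : R) (n : ℕ),
      f = (∑ k ∈ Finset.range (n + 1),
            algebraMap ℚ R (1 / k.factorial) * (x ^ k * E (D^[k] f)))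
        + (∑ k ∈ Finset.range (n + 1),
            algebraMap ℚ R ((-1) ^ (n - k) / (k.factorial * (n - k).factorial))
              * (x ^ k * I (x ^ (n - k) * D^[n + 1] f)))
        - (∑ k ∈ Finset.range n, ∑ j ∈ Finset.Icc 1 (n - k),
            algebraMap ℚ R ((-1) ^ (n - k - j) /
                (k.factorial * j.factorial * (n - k - j).factorial))
              * (x ^ k * E (x ^ j * I (x ^ (n - k - j) * D^[n + 1] f)))) := by
  set φ : ℚ →+* R := algebraMap ℚ R with hφ
  -- basic derivative facts
  have hD0 : D 0 = 0 := by have := hD1 0 0; simpa using this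
  have hDneg : ∀ f : R, D (-f) = - D f := by
    intro f
    have h := hD1 f (-f)
    rw [add_neg_cancel, hD0] at h
    exact eq_neg_of_add_eq_zero_right h.symm
  have hDsub : ∀ f g : R, D (f - g) = D f - D g := by
    intro f g
    rw [sub_eq_add_neg, hD1, hDneg, sub_eq_add_neg]
  have hDone : D 1 = 0 := by have := hD2 1 1; simpa using this
  have hDnat : ∀ m : ℕ, D (m : R) = 0 := by
    intro m
    induction m with
    | zero => simpa using hD0
    | succ m ih => push_cast; rw [hD1, ih, hDone, add_zero]
  have hDq : ∀ q : ℚ, D (φ q) = 0 := by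
    intro q
    have h1 : (q.den : R) * D (φ q) = 0 := by
      have h2 : D ((q.den : R) * φ q) = D (q.den : R) * φ q + (q.den : R) * D (φ q) := hD2 _ _
      rw [hDnat, zero_mul, zero_add] at h2
      rw [← h2]
      have h3 : (q.den : R) * φ q = ((q.num : ℤ) : R) := by
        rw [show ((q.den : R)) = φ ((q.den : ℚ)) by simp [hφ], ← map_mul]
        rw [Rat.den_mul_eq_num]
        simp [hφ]
      rw [h3]
      rcases q.num.eq_nat_or_neg with ⟨m, hm | hm⟩ <;> rw [hm]
      · push_cast; exact hDnat m
      · push_cast; rw [hDneg, hDnat, neg_zero]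
    have h5 : D (φ q) = φ ((1:ℚ)/q.den) * ((q.den : R) * D (φ q)) := by
      rw [show ((q.den : R)) = φ ((q.den : ℚ)) by simp [hφ], ← mul_assoc, ← map_mul]
      rw [one_div, inv_mul_cancel₀ (by exact_mod_cast q.den_ne_zero)]
      simp [hφ]
    rw [h5, h1, mul_zero]
  -- integral and evaluation facts
  have hIq : ∀ (q : ℚ) (f : R), I (φ q * f) = φ q * I f := fun q f => hI2 _ _ (hDq q)
  have hI0 : I 0 = 0 := by have := hI1 0 0; simpa using this
  have hIneg : ∀ f : R, I (-f) = - I f := by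
    intro f
    have h := hIq (-1) f
    simpa [hφ] using h
  have hIsub : ∀ f g : R, I (f - g) = I f - I g := by
    intro f g
    rw [sub_eq_add_neg, hI1, hIneg, sub_eq_add_neg]
  have hIDE : ∀ f : R, I (D f) = f - E f := by intro f; rw [hE]; abel
  have hdecomp : ∀ f : R, f = E f + I (D f) := by intro f; rw [hE]; abel
  have hDE : ∀ f : R, D (E f) = 0 := by
    intro f; rw [hE, hDsub, hDI, sub_self]
  have hEadd : ∀ f g : R, E (f + g) = E f + E g := by
    intro f g; rw [hE, hE, hE, hD1, hI1]; abel
  have hEsub : ∀ f g : R, E (f - g) = E f - E g := by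
    intro f g; rw [hE, hE, hE, hDsub, hIsub]; abel
  have hEnsmul : ∀ (n : ℕ) (f : R), E (n • f) = n • E f := by
    intro n
    induction n with
    | zero => intro f; simp only [zero_smul]; rw [hE, hD0, hI0, sub_zero]
    | succ n ih => intro f; rw [succ_nsmul, succ_nsmul, hEadd, ih]
  have hEq : ∀ (q : ℚ) (f : R), E (φ q * f) = φ q * E f := by
    intro q f
    rw [hE, hE]
    have hd : D (φ q * f) = φ q * D f := by
      rw [hD2, hDq, zero_mul, zero_add]
    rw [hd, hIq, mul_sub]
  have hEmulC : ∀ (f c : R), D c = 0 → E (f * c) = E f * c := by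
    intro f c hc
    rw [hE, hE]
    have hd : D (f * c) = D f * c := by rw [hD2, hc, mul_zero, add_zero]
    rw [hd, hI3 _ _ hc, sub_mul]
  have hEI : ∀ f : R, E (I f) = 0 := by intro f; rw [hE, hDI, sub_self]
  -- x lemmas
  have hcomm : ∀ (q : ℚ) (a : R), a * φ q = φ q * a := fun q a => (Algebra.commutes q a).symm
  have hDx : D x = 1 := by rw [hx]; exact hDI 1
  have hDxpow : ∀ m : ℕ, D (x^(m+1)) = φ ((m:ℚ)+1) * x^m := by
    intro m
    induction m with
    | zero => simp [pow_one, hDx, hφ]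
    | succ m ih =>
      rw [pow_succ (n := m+1), hD2, ih, hDx, mul_one, mul_assoc, ← pow_succ]
      have hc : ((((m+1):ℕ)):ℚ)+1 = ((m:ℚ)+1)+1 := by push_cast; ring
      rw [hc, map_add, map_add, map_one, add_mul, add_mul, one_mul]
      rw [map_add, map_one, add_mul, one_mul]
  have hDIk : ∀ k : ℕ, D (I^[k+1] 1) = I^[k] 1 := by
    intro k
    rw [Function.iterate_succ_apply']
    exact hDI _
  have hEIk : ∀ k : ℕ, E (I^[k+1] 1) = 0 := by
    intro k
    rw [Function.iterate_succ_apply']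
    exact hEI _
  have hxk : ∀ k : ℕ, x * I^[k] 1 = (k+1) • I^[k+1] 1 := by
    intro k
    induction k with
    | zero => simp [hx]
    | succ k ih =>
      have hDg : D (x * I^[k+1] 1 - (k+2) • I^[k+2] 1) = 0 := by
        rw [hDsub, hD2, hDx, one_mul, hDIk]
        have hDsm : D ((k+2) • I^[k+2] 1) = (k+2) • I^[k+1] 1 := by
          have : ∀ (n : ℕ) (a : R), D (n • a) = n • D a := by
            intro n
            induction n with
            | zero => intro a; simpa using hD0
            | succ n ihn => intro a; rw [succ_nsmul, succ_nsmul, hD1, ihn]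
          rw [this, hDIk]
        rw [hDsm, ih]
        rw [succ_nsmul (I^[k+1] 1) (k+1)]
        abel
      have hEg : E (x * I^[k+1] 1 - (k+2) • I^[k+2] 1) = 0 := by
        rw [hEsub, hEnsmul, hEIk, smul_zero]
        have hxx : x = I^[1] 1 := by simp [hx]
        rw [hxx]
        rw [hEmul 1 (k+1) (by omega) (by omega)]
        simp
      have hg := hdecomp (x * I^[k+1] 1 - (k+2) • I^[k+2] 1)
      rw [hDg, hEg, hI0, add_zero] at hg
      exact sub_eq_zero.mp hg
  have hxpow : ∀ k : ℕ, x^k = k.factorial • I^[k] 1 := by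
    intro k
    induction k with
    | zero => simp
    | succ k ih =>
      rw [pow_succ', ih, mul_smul_comm, hxk, smul_smul, Nat.factorial_succ]
      congr 1
      ring
  have hExpow : ∀ m : ℕ, E (x^(m+1)) = 0 := by
    intro m
    rw [hxpow, hEnsmul, hEIk, smul_zero]
  have hIBP : ∀ (m : ℕ) (w : R), I (x^m * w)
      = φ (1/((m:ℚ)+1)) * (x^(m+1) * w - E (x^(m+1) * w) - I (x^(m+1) * D w)) := by
    intro m w
    have h1 : D (x^(m+1) * w) = φ ((m:ℚ)+1) * (x^m * w) + x^(m+1) * D w := by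
      rw [hD2, hDxpow, mul_assoc]
    have h2 : x^(m+1) * w - E (x^(m+1) * w)
        = φ ((m:ℚ)+1) * I (x^m * w) + I (x^(m+1) * D w) := by
      rw [← hIDE, h1, hI1, hIq]
    have h3 : φ ((m:ℚ)+1) * I (x^m * w)
        = x^(m+1) * w - E (x^(m+1) * w) - I (x^(m+1) * D w) :=
      eq_sub_of_add_eq h2.symm
    have h4 : φ ((1:ℚ)/((m:ℚ)+1)) * φ ((m:ℚ)+1) = 1 := by
      rw [← map_mul, one_div, inv_mul_cancel₀ (by positivity), map_one]
    rw [← one_mul (I (x^m * w)), ← h4, mul_assoc, h3]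
  have hEred : ∀ (m : ℕ) (w : R), E (x^(m+1) * w) = E (x^(m+1) * I (D w)) := by
    intro m w
    conv_lhs => rw [hdecomp w]
    rw [mul_add, hEadd, hEmulC _ _ (hDE w), hExpow, zero_mul, zero_add]
  have hExc : ∀ (m : ℕ) (c : R), D c = 0 → E (x^(m+1) * c) = 0 := by
    intro m c hc
    rw [hEmulC _ _ hc, hExpow, zero_mul]
  intro f n
  induction n with
  | zero =>
    simp only [Finset.range_one, Finset.sum_singleton, Finset.range_zero, Finset.sum_empty,
      sub_zero, pow_zero, one_mul, Function.iterate_zero, Function.iterate_one, id_eq,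
      Nat.sub_zero, Nat.factorial_zero, Nat.cast_one]
    norm_num
    exact hdecomp f
  | succ n ih =>
    have hiter : D^[n+1+1] f = D (D^[n+1] f) := Function.iterate_succ_apply' D (n+1) f
    simp only [hiter]
    conv_lhs => rw [ih]
    set w := D^[n+1] f with hw
    have hB1 : (∑ k ∈ Finset.range (n + 1),
          φ ((-1) ^ (n - k) / (k.factorial * (n - k).factorial))
            * (x ^ k * I (x ^ (n - k) * w)))
        = ((φ (1/((n+1).factorial:ℚ)) * (x^(n+1) * E w)
            + φ (1/((n+1).factorial:ℚ)) * (x^(n+1) * I (D w)))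
          - ∑ k ∈ Finset.range (n + 1),
              φ ((-1) ^ (n - k) / (k.factorial * (n+1-k).factorial))
                * (x ^ k * E (x ^ (n+1-k) * I (D w))))
          - ∑ k ∈ Finset.range (n + 1),
              φ ((-1) ^ (n - k) / (k.factorial * (n+1-k).factorial))
                * (x ^ k * I (x ^ (n+1-k) * D w)) := by
      have hterm : ∀ k ∈ Finset.range (n+1),
          φ ((-1) ^ (n - k) / (k.factorial * (n - k).factorial))
            * (x ^ k * I (x ^ (n - k) * w))
          = φ ((-1) ^ (n - k) / (k.factorial * (n+1-k).factorial)) * (x^(n+1) * w)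
            - φ ((-1) ^ (n - k) / (k.factorial * (n+1-k).factorial))
                * (x ^ k * E (x ^ (n+1-k) * I (D w)))
            - φ ((-1) ^ (n - k) / (k.factorial * (n+1-k).factorial))
                * (x ^ k * I (x ^ (n+1-k) * D w)) := by
        intro k hk
        rw [Finset.mem_range] at hk
        rw [hIBP (n-k) w]
        rw [show x^k * (φ (1/((↑(n-k):ℚ)+1)) * (x^(n-k+1)*w - E (x^(n-k+1)*w) - I (x^(n-k+1)*D w)))
              = φ (1/((↑(n-k):ℚ)+1)) * (x^k * (x^(n-k+1)*w - E (x^(n-k+1)*w) - I (x^(n-k+1)*D w)))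
            from by rw [← mul_assoc, hcomm, mul_assoc]]
        rw [← mul_assoc, ← map_mul, qm2, show (n-k)+1 = n+1-k from by omega]
        rw [mul_sub, mul_sub, mul_sub, mul_sub]
        rw [show x^k * (x^(n+1-k)*w) = x^(n+1)*w from by
          rw [← mul_assoc, ← pow_add, show k+(n+1-k) = n+1 from by omega]]
        rw [show E (x^(n+1-k)*w) = E (x^(n+1-k) * I (D w)) from by
          rw [show n+1-k = (n-k)+1 from by omega, hEred]]
      rw [Finset.sum_congr rfl hterm, Finset.sum_sub_distrib, Finset.sum_sub_distrib]
      congr 2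
      rw [← Finset.sum_mul, ← map_sum, qsum1 n]
      conv_lhs => rw [hdecomp w]
      rw [mul_add, mul_add]
    have hC1 : (∑ k ∈ Finset.range n, ∑ j ∈ Finset.Icc 1 (n - k),
          φ ((-1) ^ (n - k - j) / (k.factorial * j.factorial * (n - k - j).factorial))
            * (x ^ k * E (x ^ j * I (x ^ (n - k - j) * w))))
        = (∑ k ∈ Finset.range n, ∑ j ∈ Finset.Icc 1 (n - k),
            φ ((-1) ^ (n - k - j) / (k.factorial * j.factorial * (n+1-k-j).factorial))
              * (x ^ k * E (x ^ (n+1-k) * I (D w))))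
          - (∑ k ∈ Finset.range n, ∑ j ∈ Finset.Icc 1 (n - k),
            φ ((-1) ^ (n - k - j) / (k.factorial * j.factorial * (n+1-k-j).factorial))
              * (x ^ k * E (x ^ j * I (x ^ (n+1-k-j) * D w)))) := by
      have hterm : ∀ k ∈ Finset.range n, ∀ j ∈ Finset.Icc 1 (n-k),
          φ ((-1) ^ (n - k - j) / (k.factorial * j.factorial * (n - k - j).factorial))
            * (x ^ k * E (x ^ j * I (x ^ (n - k - j) * w)))
          = φ ((-1) ^ (n - k - j) / (k.factorial * j.factorial * (n+1-k-j).factorial))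
              * (x ^ k * E (x ^ (n+1-k) * I (D w)))
            - φ ((-1) ^ (n - k - j) / (k.factorial * j.factorial * (n+1-k-j).factorial))
              * (x ^ k * E (x ^ j * I (x ^ (n+1-k-j) * D w))) := by
        intro k hk j hj
        rw [Finset.mem_range] at hk
        rw [Finset.mem_Icc] at hj
        rw [hIBP (n-k-j) w]
        rw [show x^j * (φ (1/((↑(n-k-j):ℚ)+1)) * (x^(n-k-j+1)*w - E (x^(n-k-j+1)*w) - I (x^(n-k-j+1)*D w)))
              = φ (1/((↑(n-k-j):ℚ)+1)) * (x^j * (x^(n-k-j+1)*w - E (x^(n-k-j+1)*w) - I (x^(n-k-j+1)*D w)))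
            from by rw [← mul_assoc, hcomm, mul_assoc]]
        rw [hEq]
        rw [show x^k * (φ (1/((↑(n-k-j):ℚ)+1)) * E (x^j * (x^(n-k-j+1)*w - E (x^(n-k-j+1)*w) - I (x^(n-k-j+1)*D w))))
              = φ (1/((↑(n-k-j):ℚ)+1)) * (x^k * E (x^j * (x^(n-k-j+1)*w - E (x^(n-k-j+1)*w) - I (x^(n-k-j+1)*D w))))
            from by rw [← mul_assoc, hcomm, mul_assoc]]
        rw [← mul_assoc, ← map_mul, qm2, show (n-k-j)+1 = n+1-k-j from by omega]
        rw [mul_sub, mul_sub, hEsub, hEsub]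
        have hz : E (x^j * E (x^(n+1-k-j)*w)) = 0 := by
          rw [show j = (j-1)+1 from by omega]
          exact hExc (j-1) _ (hDE _)
        rw [hz, sub_zero]
        rw [show x^j * (x^(n+1-k-j)*w) = x^(n+1-k)*w from by
          rw [← mul_assoc, ← pow_add, show j+(n+1-k-j) = n+1-k from by omega]]
        rw [show E (x^(n+1-k)*w) = E (x^(n+1-k) * I (D w)) from by
          rw [show n+1-k = (n-k)+1 from by omega, hEred]]
        rw [mul_sub, mul_sub]
      calc (∑ k ∈ Finset.range n, ∑ j ∈ Finset.Icc 1 (n - k),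
          φ ((-1) ^ (n - k - j) / (k.factorial * j.factorial * (n - k - j).factorial))
            * (x ^ k * E (x ^ j * I (x ^ (n - k - j) * w))))
          = ∑ k ∈ Finset.range n, ∑ j ∈ Finset.Icc 1 (n - k),
            (φ ((-1) ^ (n - k - j) / (k.factorial * j.factorial * (n+1-k-j).factorial))
              * (x ^ k * E (x ^ (n+1-k) * I (D w)))
            - φ ((-1) ^ (n - k - j) / (k.factorial * j.factorial * (n+1-k-j).factorial))
              * (x ^ k * E (x ^ j * I (x ^ (n+1-k-j) * D w)))) :=
            Finset.sum_congr rfl fun k hk => Finset.sum_congr rfl fun j hj => hterm k hk j hj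
        _ = _ := by simp only [Finset.sum_sub_distrib]
    have hT1 : (∑ k ∈ Finset.range (n+1+1), φ (1 / (k.factorial : ℚ)) * (x ^ k * E (D^[k] f)))
        = (∑ k ∈ Finset.range (n+1), φ (1 / (k.factorial : ℚ)) * (x ^ k * E (D^[k] f)))
          + φ (1/(((n+1).factorial : ℚ))) * (x^(n+1) * E w) := by
      rw [Finset.sum_range_succ, ← hw]
    have hB2 : (∑ k ∈ Finset.range (n+1+1),
          φ ((-1) ^ (n+1-k) / (k.factorial * (n+1-k).factorial))
            * (x ^ k * I (x ^ (n+1-k) * D w)))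
        = φ (1/(((n+1).factorial : ℚ))) * (x^(n+1) * I (D w))
          - ∑ k ∈ Finset.range (n + 1),
              φ ((-1) ^ (n - k) / (k.factorial * (n+1-k).factorial))
                * (x ^ k * I (x ^ (n+1-k) * D w)) := by
      rw [Finset.sum_range_succ]
      have hlast : φ ((-1:ℚ) ^ (n+1-(n+1)) / ((n+1).factorial * (n+1-(n+1)).factorial))
            * (x ^ (n+1) * I (x ^ (n+1-(n+1)) * D w))
          = φ (1/(((n+1).factorial : ℚ))) * (x^(n+1) * I (D w)) := by
        norm_num [Nat.sub_self]
      have hflip : ∀ k ∈ Finset.range (n+1),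
          φ ((-1) ^ (n+1-k) / (k.factorial * (n+1-k).factorial))
            * (x ^ k * I (x ^ (n+1-k) * D w))
          = -(φ ((-1) ^ (n-k) / (k.factorial * (n+1-k).factorial))
            * (x ^ k * I (x ^ (n+1-k) * D w))) := by
        intro k hk
        rw [Finset.mem_range] at hk
        have hsg : ((-1):ℚ)^(n+1-k) = -(-1:ℚ)^(n-k) := by
          rw [show n+1-k = (n-k)+1 from by omega, pow_succ]; ring
        rw [hsg, neg_div, map_neg, neg_mul]
      rw [Finset.sum_congr rfl hflip, Finset.sum_neg_distrib, hlast, neg_add_eq_sub]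
    have hC2 : (∑ k ∈ Finset.range (n+1), ∑ j ∈ Finset.Icc 1 (n+1-k),
          φ ((-1) ^ (n+1-k-j) / (k.factorial * j.factorial * (n+1-k-j).factorial))
            * (x ^ k * E (x ^ j * I (x ^ (n+1-k-j) * D w))))
        = (∑ k ∈ Finset.range (n+1),
            φ ((1:ℚ)/(k.factorial * (n+1-k).factorial))
              * (x ^ k * E (x ^ (n+1-k) * I (D w))))
          - (∑ k ∈ Finset.range n, ∑ j ∈ Finset.Icc 1 (n - k),
            φ ((-1) ^ (n - k - j) / (k.factorial * j.factorial * (n+1-k-j).factorial))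
              * (x ^ k * E (x ^ j * I (x ^ (n+1-k-j) * D w)))) := by
      have hsplit : ∀ k ∈ Finset.range (n+1),
          (∑ j ∈ Finset.Icc 1 (n+1-k),
            φ ((-1) ^ (n+1-k-j) / (k.factorial * j.factorial * (n+1-k-j).factorial))
              * (x ^ k * E (x ^ j * I (x ^ (n+1-k-j) * D w))))
          = φ ((1:ℚ)/(k.factorial * (n+1-k).factorial))
              * (x ^ k * E (x ^ (n+1-k) * I (D w)))
            - ∑ j ∈ Finset.Icc 1 (n - k),
              φ ((-1) ^ (n - k - j) / (k.factorial * j.factorial * (n+1-k-j).factorial))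
                * (x ^ k * E (x ^ j * I (x ^ (n+1-k-j) * D w))) := by
        intro k hk
        rw [Finset.mem_range] at hk
        rw [show n+1-k = (n-k)+1 from by omega]
        rw [Finset.sum_Icc_succ_top (by omega : 1 ≤ (n-k)+1)]
        have htop : φ ((-1:ℚ) ^ ((n-k)+1-((n-k)+1)) / (k.factorial * ((n-k)+1).factorial * ((n-k)+1-((n-k)+1)).factorial))
              * (x ^ k * E (x ^ ((n-k)+1) * I (x ^ ((n-k)+1-((n-k)+1)) * D w)))
            = φ ((1:ℚ)/(k.factorial * ((n-k)+1).factorial))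
              * (x ^ k * E (x ^ ((n-k)+1) * I (D w))) := by
          norm_num [Nat.sub_self]
        have hflip : ∀ j ∈ Finset.Icc 1 (n-k),
            φ ((-1) ^ ((n-k)+1-j) / (k.factorial * j.factorial * ((n-k)+1-j).factorial))
              * (x ^ k * E (x ^ j * I (x ^ ((n-k)+1-j) * D w)))
            = -(φ ((-1) ^ (n-k-j) / (k.factorial * j.factorial * ((n-k)+1-j).factorial))
              * (x ^ k * E (x ^ j * I (x ^ ((n-k)+1-j) * D w)))) := by
          intro j hj
          rw [Finset.mem_Icc] at hj
          have hsg : ((-1):ℚ)^((n-k)+1-j) = -(-1:ℚ)^(n-k-j) := by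
            rw [show (n-k)+1-j = (n-k-j)+1 from by omega, pow_succ]; ring
          rw [hsg, neg_div, map_neg, neg_mul]
        rw [Finset.sum_congr rfl hflip, Finset.sum_neg_distrib, htop, neg_add_eq_sub]
      rw [Finset.sum_congr rfl hsplit, Finset.sum_sub_distrib]
      congr 1
      rw [Finset.sum_range_succ]
      have hempty : (Finset.Icc 1 (n-n)) = ∅ := by
        rw [Nat.sub_self]; exact Finset.Icc_eq_empty (by norm_num)
      rw [hempty, Finset.sum_empty, add_zero]
    have hQkey : ∀ k : ℕ, k ≤ n →
        ((-1:ℚ))^(n-k)/((k.factorial:ℚ) * (n+1-k).factorial)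
          + ∑ j ∈ Finset.Icc 1 (n-k),
              (-1:ℚ)^(n-k-j)/((k.factorial:ℚ) * j.factorial * (n+1-k-j).factorial)
        = 1/((k.factorial:ℚ) * (n+1-k).factorial) := by
      intro k hk
      rw [show n+1-k = (n-k)+1 from by omega]
      have h := qkey (n-k)
      have h2 := congrArg (fun t : ℚ => (1/(k.factorial:ℚ)) * t) h
      simp only [mul_add, Finset.mul_sum, qfac, qfac2] at h2
      simp only [← mul_assoc] at h2
      exact h2
    have hUW : (∑ k ∈ Finset.range (n+1),
          φ ((1:ℚ)/(k.factorial * (n+1-k).factorial))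
            * (x ^ k * E (x ^ (n+1-k) * I (D w))))
        = (∑ k ∈ Finset.range (n+1),
            φ ((-1) ^ (n - k) / (k.factorial * (n+1-k).factorial))
              * (x ^ k * E (x ^ (n+1-k) * I (D w))))
          + (∑ k ∈ Finset.range n, ∑ j ∈ Finset.Icc 1 (n - k),
            φ ((-1) ^ (n - k - j) / (k.factorial * j.factorial * (n+1-k-j).factorial))
              * (x ^ k * E (x ^ (n+1-k) * I (D w)))) := by
      have hempty : (Finset.Icc 1 (n-n)) = ∅ := by
        rw [Nat.sub_self]; exact Finset.Icc_eq_empty (by norm_num)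
      have hUext : (∑ k ∈ Finset.range n, ∑ j ∈ Finset.Icc 1 (n - k),
            φ ((-1) ^ (n - k - j) / (k.factorial * j.factorial * (n+1-k-j).factorial))
              * (x ^ k * E (x ^ (n+1-k) * I (D w))))
          = ∑ k ∈ Finset.range (n+1), ∑ j ∈ Finset.Icc 1 (n - k),
            φ ((-1) ^ (n - k - j) / (k.factorial * j.factorial * (n+1-k-j).factorial))
              * (x ^ k * E (x ^ (n+1-k) * I (D w))) := by
        rw [Finset.sum_range_succ, hempty, Finset.sum_empty, add_zero]
      rw [hUext, ← Finset.sum_add_distrib]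
      refine Finset.sum_congr rfl fun k hk => ?_
      rw [Finset.mem_range] at hk
      rw [← Finset.sum_mul, ← map_sum, ← add_mul, ← map_add]
      congr 1
      exact congrArg φ (hQkey k (by omega)).symm
    rw [hB1, hC1, hT1, hB2, hC2, hUW]
    abel
end
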